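/- arXiv:2401.07485 — 3 statements merged into one kernel-verified Lean document; each statement's English description precedes it below -/
import Mathlib

section
/- Sommerfeld's integral: Let A, B, C be real numbers with A > 0, C > 0 and B > 2√(AC). Let r₁ = (B − √(B² − 4AC))/(2A) and r₂ = (B + √(B² − 4AC))/(2A) be the two (positive) zeros of p(r)² = −A + B/r − C/r². Then ∫_{r₁}^{r₂} √(−A + B/r − C/r²) dr = π (B/(2√A) − √C). -/
/-!
By Vieta, `-A + B/r - C/r² = A (r - r₁)(r₂ - r) / r²`, so the integral is `√A` times
`∫_a^b √((r - a)(b - r)) / r dr` with `a = r₁`, `b = r₂`. The latter integrand has the elementary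
primitive `√((r - a)(b - r)) + (a + b)/2 · arcsin u(r) - √(ab) · arcsin v(r)`, where `u` and `v`
are the affine and the Möbius map sending `a ↦ -1`, `b ↦ 1`; hence the integral is
`π ((a + b)/2 - √(ab))`.
-/

open Real intervalIntegral

lemma hasDerivAt_arcsin_comp_of_sq_eq {u : ℝ → ℝ} {u' w x : ℝ} (hu : HasDerivAt u u' x)
    (hw : 0 < w) (hw2 : w ^ 2 = 1 - u x ^ 2) :
    HasDerivAt (fun r => arcsin (u r)) (u' / w) x := by
  have hlt : |u x| < 1 := by
    rw [← sq_lt_one_iff_abs_lt_one]; nlinarith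
  obtain ⟨hneg, hone⟩ := abs_lt.1 hlt
  have hsqrt : √(1 - u x ^ 2) = w := by rw [← hw2, sqrt_sq hw.le]
  exact ((hasDerivAt_arcsin hneg.ne' hone.ne).comp x hu).congr_deriv (by rw [hsqrt]; ring)

section
variable {a b x : ℝ}

lemma hasDerivAt_sqrt_mul_sub (hx : x ∈ Set.Ioo a b) :
    HasDerivAt (fun r => √((r - a) * (b - r)))
      ((a + b - 2 * x) / (2 * √((x - a) * (b - x)))) x := by
  have hQ : (x - a) * (b - x) ≠ 0 := (mul_pos (sub_pos.2 hx.1) (sub_pos.2 hx.2)).ne'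
  have h : HasDerivAt (fun r => (r - a) * (b - r)) (1 * (b - x) + (x - a) * -1) x :=
    ((hasDerivAt_id x).sub_const a).mul ((hasDerivAt_id x).const_sub b)
  convert h.sqrt hQ using 2
  ring

lemma hasDerivAt_arcsin_affine (hx : x ∈ Set.Ioo a b) :
    HasDerivAt (fun r => arcsin ((2 * r - a - b) / (b - a)))
      (1 / √((x - a) * (b - x))) x := by
  have hba : 0 < b - a := sub_pos.2 (hx.1.trans hx.2)
  have hQ : 0 < (x - a) * (b - x) := mul_pos (sub_pos.2 hx.1) (sub_pos.2 hx.2)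
  have hu : HasDerivAt (fun r => (2 * r - a - b) / (b - a)) (2 * 1 / (b - a)) x :=
    ((((hasDerivAt_id x).const_mul 2).sub_const a).sub_const b).div_const (b - a)
  convert hasDerivAt_arcsin_comp_of_sq_eq hu (w := 2 * √((x - a) * (b - x)) / (b - a))
    (by positivity) ?_ using 1
  · field_simp
  · rw [div_pow, mul_pow, sq_sqrt hQ.le]
    field_simp
    ring

lemma hasDerivAt_arcsin_mobius (ha : 0 < a) (hx : x ∈ Set.Ioo a b) :
    HasDerivAt (fun r => arcsin (((a + b) * r - 2 * (a * b)) / (r * (b - a))))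
      (√(a * b) / (x * √((x - a) * (b - x)))) x := by
  have hx0 : 0 < x := ha.trans hx.1
  have hba : 0 < b - a := sub_pos.2 (hx.1.trans hx.2)
  have hab : 0 < a * b := mul_pos ha (ha.trans (hx.1.trans hx.2))
  have hQ : 0 < (x - a) * (b - x) := mul_pos (sub_pos.2 hx.1) (sub_pos.2 hx.2)
  have hu : HasDerivAt (fun r => ((a + b) * r - 2 * (a * b)) / (r * (b - a)))
      (((a + b) * 1 * (x * (b - a)) - ((a + b) * x - 2 * (a * b)) * (1 * (b - a)))
        / (x * (b - a)) ^ 2) x :=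
    (((hasDerivAt_id x).const_mul (a + b)).sub_const _).div
      ((hasDerivAt_id x).mul_const (b - a)) (by positivity)
  convert hasDerivAt_arcsin_comp_of_sq_eq hu
    (w := 2 * √(a * b) * √((x - a) * (b - x)) / (x * (b - a))) (by positivity) ?_ using 1
  · have hab2 := sq_sqrt hab.le
    field_simp
    linear_combination 2 * hab2
  · rw [div_pow, mul_pow, mul_pow, sq_sqrt hQ.le, sq_sqrt hab.le]
    field_simp
    ring

noncomputable def sommerfeldPrimitive (a b r : ℝ) : ℝ :=
  √((r - a) * (b - r)) + (a + b) / 2 * arcsin ((2 * r - a - b) / (b - a))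
    - √(a * b) * arcsin (((a + b) * r - 2 * (a * b)) / (r * (b - a)))

lemma hasDerivAt_sommerfeldPrimitive (ha : 0 < a) (hx : x ∈ Set.Ioo a b) :
    HasDerivAt (sommerfeldPrimitive a b) (√((x - a) * (b - x)) / x) x := by
  have hx0 : 0 < x := ha.trans hx.1
  have hQ : 0 < (x - a) * (b - x) := mul_pos (sub_pos.2 hx.1) (sub_pos.2 hx.2)
  have hab : 0 < a * b := mul_pos ha (ha.trans (hx.1.trans hx.2))
  refine (((hasDerivAt_sqrt_mul_sub hx).add ((hasDerivAt_arcsin_affine hx).const_mul _)).sub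
    ((hasDerivAt_arcsin_mobius ha hx).const_mul _)).congr_deriv ?_
  have hq2 := sq_sqrt hQ.le
  have hab2 := sq_sqrt hab.le
  field_simp
  linear_combination (-2) * hq2 - 2 * hab2

lemma continuousOn_sommerfeldPrimitive (ha : 0 < a) (hab : a < b) :
    ContinuousOn (sommerfeldPrimitive a b) (Set.Icc a b) := by
  have hne : ∀ r ∈ Set.Icc a b, r * (b - a) ≠ 0 := fun r hr =>
    (mul_pos (ha.trans_le hr.1) (sub_pos.2 hab)).ne'
  unfold sommerfeldPrimitive
  fun_prop (disch := assumption)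

theorem integral_sqrt_mul_sub_div_self (ha : 0 < a) (hab : a < b) :
    ∫ r in a..b, √((r - a) * (b - r)) / r = π * ((a + b) / 2 - √(a * b)) := by
  have hba : b - a ≠ 0 := (sub_pos.2 hab).ne'
  have hb : b ≠ 0 := (ha.trans hab).ne'
  have hintegrand : ContinuousOn (fun r => √((r - a) * (b - r)) / r) (Set.uIcc a b) := by
    rw [Set.uIcc_of_le hab.le]
    exact ContinuousOn.div (by fun_prop) continuousOn_id fun r hr => (ha.trans_le hr.1).ne'
  rw [integral_eq_sub_of_hasDeriv_right_of_le hab.le (continuousOn_sommerfeldPrimitive ha hab)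
    (fun x hx => (hasDerivAt_sommerfeldPrimitive ha hx).hasDerivWithinAt)
    hintegrand.intervalIntegrable]
  have h₁ : (2 * b - a - b) / (b - a) = 1 := by field_simp; ring
  have h₂ : (2 * a - a - b) / (b - a) = -1 := by field_simp; ring
  have h₃ : ((a + b) * b - 2 * (a * b)) / (b * (b - a)) = 1 := by field_simp; ring
  have h₄ : ((a + b) * a - 2 * (a * b)) / (a * (b - a)) = -1 := by field_simp; ring
  simp only [sommerfeldPrimitive, sub_self, mul_zero, zero_mul, sqrt_zero, h₁, h₂, h₃, h₄,
    arcsin_one, arcsin_neg_one]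
  ring

end

lemma sqrt_neg_add_div_sub_div_sq {A r r₁ r₂ : ℝ} (hA : 0 ≤ A) (hr : 0 < r) :
    √(-A + A * (r₁ + r₂) / r - A * (r₁ * r₂) / r ^ 2) = √A * (√((r - r₁) * (r₂ - r)) / r) := by
  rw [show -A + A * (r₁ + r₂) / r - A * (r₁ * r₂) / r ^ 2 = A * ((r - r₁) * (r₂ - r)) / r ^ 2 by
    field_simp; ring, sqrt_div' _ (sq_nonneg r), sqrt_sq hr.le, sqrt_mul hA, mul_div_assoc]

lemma sommerfeld_roots {A B C r₁ r₂ : ℝ} (hA : 0 < A) (hC : 0 < C)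
    (hB : B > 2 * √(A * C))
    (hr₁ : r₁ = (B - √(B ^ 2 - 4 * A * C)) / (2 * A))
    (hr₂ : r₂ = (B + √(B ^ 2 - 4 * A * C)) / (2 * A)) :
    0 < r₁ ∧ r₁ < r₂ ∧ B = A * (r₁ + r₂) ∧ C = A * (r₁ * r₂) := by
  have hAC : 0 < A * C := mul_pos hA hC
  have hΔ : 0 < B ^ 2 - 4 * A * C := by
    nlinarith [sq_sqrt hAC.le, sqrt_nonneg (A * C)]
  have hB0 : 0 < B := lt_of_le_of_lt (by positivity) hB
  subst hr₁ hr₂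
  have hsB : √(B ^ 2 - 4 * A * C) < B := (sqrt_lt' hB0).2 (by linarith)
  have hs : 0 < √(B ^ 2 - 4 * A * C) := sqrt_pos.2 hΔ
  have hs2 := sq_sqrt hΔ.le
  set s := √(B ^ 2 - 4 * A * C)
  refine ⟨div_pos (by linarith) (by positivity), ?_, ?_, ?_⟩
  · gcongr; linarith
  · field_simp; ring
  · field_simp; linear_combination hs2

/-- Sommerfeld's integral: for `A, C > 0` and `B > 2√(AC)`, with `r₁ ≤ r₂` the two
positive zeros of `-A + B/r - C/r²`, one has
`∫_{r₁}^{r₂} √(-A + B/r - C/r²) dr = π (B/(2√A) - √C)`. -/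
theorem sommerfeld_integral (A B C : ℝ) (hA : 0 < A) (hC : 0 < C)
    (hB : B > 2 * Real.sqrt (A * C))
    (r₁ r₂ : ℝ)
    (hr₁ : r₁ = (B - Real.sqrt (B ^ 2 - 4 * A * C)) / (2 * A))
    (hr₂ : r₂ = (B + Real.sqrt (B ^ 2 - 4 * A * C)) / (2 * A)) :
    ∫ r in r₁..r₂, Real.sqrt (-A + B / r - C / r ^ 2)
      = Real.pi * (B / (2 * Real.sqrt A) - Real.sqrt C) := by
  obtain ⟨hr₁0, hr₁₂, rfl, rfl⟩ := sommerfeld_roots hA hC hB hr₁ hr₂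
  calc ∫ r in r₁..r₂, √(-A + A * (r₁ + r₂) / r - A * (r₁ * r₂) / r ^ 2)
      = ∫ r in r₁..r₂, √A * (√((r - r₁) * (r₂ - r)) / r) := by
        refine integral_congr fun r hr => sqrt_neg_add_div_sub_div_sq hA.le ?_
        rw [Set.uIcc_of_le hr₁₂.le] at hr
        exact hr₁0.trans_le hr.1
    _ = √A * (π * ((r₁ + r₂) / 2 - √(r₁ * r₂))) := by
        rw [integral_const_mul, integral_sqrt_mul_sub_div_self hr₁0 hr₁₂]
    _ = π * (A * (r₁ + r₂) / (2 * √A) - √(A * (r₁ * r₂))) := by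
        rw [sqrt_mul hA.le]
        field_simp
        rw [sq_sqrt hA.le]
        ring
end

section
/- Trigonometric Sommerfeld-type integral: Let A, B, C be real numbers with B > 0, C > 0 and √A > √B + √C. Let θ₁ < θ₂ be the two solutions in the open interval (0, π/2) of A − B/cos²θ − C/sin²θ = 0. Then ∫_{θ₁}^{θ₂} √(A − B/cos²θ − C/sin²θ) dθ = (π/2)(√A − √B − √C). -/
/-!
Substituting `u = sin² θ` turns the integrand into `√A · √((u - u₁)(u₂ - u)) / (2u(1 - u)) du`,
where `u₁ = sin² θ₁ < u₂ = sin² θ₂` are the two roots of `A u (1 - u) - B u - C (1 - u)`, so that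
`C = A u₁ u₂` and `B = A (1 - u₁)(1 - u₂)`. Splitting `1 / (u(1 - u)) = 1 / u + 1 / (1 - u)`
reduces everything to `∫_a^b √((x - a)(b - x)) / x dx = (π/2)(√b - √a)²` and its reflection
`x ↦ 1 - x`; the former is evaluated through an explicit primitive built from two arcsines.
-/

open Real intervalIntegral

open MeasureTheory (volume)

theorem HasDerivAt.arcsin_of_one_sub_sq_eq {f : ℝ → ℝ} {f' r x : ℝ} (hf : HasDerivAt f f' x)
    (hr : 0 < r) (h : 1 - f x ^ 2 = r ^ 2) : HasDerivAt (fun y => arcsin (f y)) (f' / r) x := by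
  have hlt : f x ^ 2 < 1 := by nlinarith
  have h₁ : f x ≠ -1 := by rintro h'; rw [h'] at hlt; norm_num at hlt
  have h₂ : f x ≠ 1 := by rintro h'; rw [h'] at hlt; norm_num at hlt
  have := (hasDerivAt_arcsin h₁ h₂).comp x hf
  rw [h, sqrt_sq hr.le] at this
  exact this.congr_deriv (by ring)

/-- A primitive of `√((x - a)(b - x)) / x` written with `a = p ^ 2`, `b = q ^ 2` to avoid square
roots; the arcsine arguments run between `∓1` at `x = p ^ 2` and `±1` at `x = q ^ 2`. -/
noncomputable def sqrtMulDivPrimitive (p q x : ℝ) : ℝ :=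
  √((x - p ^ 2) * (q ^ 2 - x))
    + (p ^ 2 + q ^ 2) / 2 * arcsin ((2 * x - p ^ 2 - q ^ 2) / (q ^ 2 - p ^ 2))
    + p * q * arcsin ((2 * p ^ 2 * q ^ 2 - (p ^ 2 + q ^ 2) * x) / ((q ^ 2 - p ^ 2) * x))

section Primitive

variable {p q : ℝ}

theorem continuousOn_sqrtMulDivPrimitive (hp : 0 < p) (hpq : p ^ 2 < q ^ 2) :
    ContinuousOn (sqrtMulDivPrimitive p q) (Set.Icc (p ^ 2) (q ^ 2)) := by
  have hden : ∀ x ∈ Set.Icc (p ^ 2) (q ^ 2), (q ^ 2 - p ^ 2) * x ≠ 0 := fun x hx =>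
    mul_ne_zero (sub_pos.2 hpq).ne' ((pow_pos hp 2).trans_le hx.1).ne'
  refine ContinuousOn.add (ContinuousOn.add (by fun_prop) (by fun_prop))
    (continuousOn_const.mul (ContinuousOn.arcsin ?_))
  exact ContinuousOn.div (by fun_prop) (by fun_prop) hden

theorem hasDerivAt_sqrtMulDivPrimitive (hp : 0 < p) (hpq : p < q) {x : ℝ}
    (hx : x ∈ Set.Ioo (p ^ 2) (q ^ 2)) :
    HasDerivAt (sqrtMulDivPrimitive p q) (√((x - p ^ 2) * (q ^ 2 - x)) / x) x := by
  obtain ⟨hpx, hxq⟩ := hx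
  have hq : 0 < q := hp.trans hpq
  have hx : 0 < x := (pow_pos hp 2).trans hpx
  have hqp : 0 < q ^ 2 - p ^ 2 := sub_pos.2 (hpx.trans hxq)
  have hQ : 0 < (x - p ^ 2) * (q ^ 2 - x) := mul_pos (sub_pos.2 hpx) (sub_pos.2 hxq)
  set R := √((x - p ^ 2) * (q ^ 2 - x)) with hR
  have hRpos : 0 < R := sqrt_pos.2 hQ
  have hR2 : R ^ 2 = (x - p ^ 2) * (q ^ 2 - x) := sq_sqrt hQ.le
  have dQ : HasDerivAt (fun y => (y - p ^ 2) * (q ^ 2 - y)) (p ^ 2 + q ^ 2 - 2 * x) x :=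
    (((hasDerivAt_id' x).sub_const _).mul ((hasDerivAt_id' x).const_sub _)).congr_deriv (by ring)
  have dArg₁ : HasDerivAt (fun y => (2 * y - p ^ 2 - q ^ 2) / (q ^ 2 - p ^ 2))
      (2 / (q ^ 2 - p ^ 2)) x :=
    (((((hasDerivAt_id' x).const_mul 2).sub_const _).sub_const _).div_const _).congr_deriv
      (by ring)
  have dArg₂ : HasDerivAt
      (fun y => (2 * p ^ 2 * q ^ 2 - (p ^ 2 + q ^ 2) * y) / ((q ^ 2 - p ^ 2) * y))
      (-(2 * p ^ 2 * q ^ 2) / ((q ^ 2 - p ^ 2) * x ^ 2)) x := by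
    refine ((((hasDerivAt_id' x).const_mul _).const_sub _).div
      ((hasDerivAt_id' x).const_mul _) (by positivity)).congr_deriv ?_
    field_simp; ring
  have dArcsin₁ := dArg₁.arcsin_of_one_sub_sq_eq (r := 2 * R / (q ^ 2 - p ^ 2)) (by positivity)
    (by field_simp; rw [hR2]; ring)
  have dArcsin₂ := dArg₂.arcsin_of_one_sub_sq_eq (r := 2 * p * q * R / ((q ^ 2 - p ^ 2) * x))
    (by positivity) (by field_simp; rw [hR2]; ring)
  refine (((dQ.sqrt hQ.ne').add (dArcsin₁.const_mul ((p ^ 2 + q ^ 2) / 2))).add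
    (dArcsin₂.const_mul (p * q))).congr_deriv ?_
  rw [← hR]
  field_simp
  nlinarith

theorem sqrtMulDivPrimitive_sub (hp : 0 < p) (hpq : p < q) :
    sqrtMulDivPrimitive p q (q ^ 2) - sqrtMulDivPrimitive p q (p ^ 2) = π / 2 * (q - p) ^ 2 := by
  have hq : 0 < q := hp.trans hpq
  have hqp : q ^ 2 - p ^ 2 ≠ 0 := (sub_pos.2 (pow_lt_pow_left₀ hpq hp.le two_ne_zero)).ne'
  have e₁ : (2 * q ^ 2 - p ^ 2 - q ^ 2) / (q ^ 2 - p ^ 2) = 1 := by field_simp; ring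
  have e₂ : (2 * p ^ 2 * q ^ 2 - (p ^ 2 + q ^ 2) * q ^ 2) / ((q ^ 2 - p ^ 2) * q ^ 2) = -1 := by
    field_simp; ring
  have e₃ : (2 * p ^ 2 - p ^ 2 - q ^ 2) / (q ^ 2 - p ^ 2) = -1 := by field_simp; ring
  have e₄ : (2 * p ^ 2 * q ^ 2 - (p ^ 2 + q ^ 2) * p ^ 2) / ((q ^ 2 - p ^ 2) * p ^ 2) = 1 := by
    field_simp; ring
  simp only [sqrtMulDivPrimitive, sub_self, mul_zero, zero_mul, sqrt_zero, e₁, e₂, e₃, e₄,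
    arcsin_one, arcsin_neg_one]
  ring

end Primitive

theorem integral_sqrt_mul_div_self {a b : ℝ} (ha : 0 < a) (hab : a < b) :
    ∫ x in a..b, √((x - a) * (b - x)) / x = π / 2 * (√b - √a) ^ 2 := by
  obtain ⟨p, hp, rfl⟩ : ∃ p, 0 < p ∧ a = p ^ 2 := ⟨√a, sqrt_pos.2 ha, (sq_sqrt ha.le).symm⟩
  obtain ⟨q, hq, rfl⟩ : ∃ q, 0 < q ∧ b = q ^ 2 :=
    ⟨√b, sqrt_pos.2 (ha.trans hab), (sq_sqrt (ha.trans hab).le).symm⟩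
  have hpq : p < q := (pow_lt_pow_iff_left₀ hp.le hq.le two_ne_zero).1 hab
  have hint :
      IntervalIntegrable (fun x => √((x - p ^ 2) * (q ^ 2 - x)) / x) volume (p ^ 2) (q ^ 2) :=
    ContinuousOn.intervalIntegrable_of_Icc hab.le
      (ContinuousOn.div (by fun_prop) (by fun_prop) fun x hx => (ha.trans_le hx.1).ne')
  rw [integral_eq_sub_of_hasDerivAt_of_le hab.le (continuousOn_sqrtMulDivPrimitive hp hab)
    (fun x hx => hasDerivAt_sqrtMulDivPrimitive hp hpq hx) hint, sqrtMulDivPrimitive_sub hp hpq,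
    sqrt_sq hp.le, sqrt_sq hq.le]

theorem integral_sqrt_mul_div_const_sub {a b c : ℝ} (hab : a < b) (hbc : b < c) :
    ∫ x in a..b, √((x - a) * (b - x)) / (c - x) = π / 2 * (√(c - a) - √(c - b)) ^ 2 :=
  calc ∫ x in a..b, √((x - a) * (b - x)) / (c - x)
      = ∫ x in a..b, (fun y => √((y - (c - b)) * (c - a - y)) / y) (c - x) := by
        refine integral_congr fun x _ => ?_
        dsimp only
        rw [show (c - x - (c - b)) * (c - a - (c - x)) = (x - a) * (b - x) by ring]
    _ = ∫ y in c - b..c - a, √((y - (c - b)) * (c - a - y)) / y :=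
      integral_comp_sub_left (fun y => √((y - (c - b)) * (c - a - y)) / y) c
    _ = π / 2 * (√(c - a) - √(c - b)) ^ 2 := integral_sqrt_mul_div_self (by linarith) (by linarith)

theorem continuousOn_sqrt_mul_div_mul_one_sub {a b : ℝ} (ha : 0 < a) (hb : b < 1) :
    ContinuousOn (fun x => √((x - a) * (b - x)) / (x * (1 - x))) (Set.Icc a b) :=
  ContinuousOn.div (by fun_prop) (by fun_prop) fun x hx =>
    (mul_pos (ha.trans_le hx.1) (by linarith [hx.2])).ne'

theorem integral_sqrt_mul_div_mul_one_sub {a b : ℝ} (ha : 0 < a) (hab : a < b) (hb : b < 1) :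
    ∫ x in a..b, √((x - a) * (b - x)) / (x * (1 - x)) =
      π * (1 - √(a * b) - √((1 - a) * (1 - b))) := by
  have hpos : ∀ x ∈ Set.uIcc a b, 0 < x ∧ 0 < 1 - x := fun x hx => by
    rw [Set.uIcc_of_le hab.le] at hx
    exact ⟨ha.trans_le hx.1, by linarith [hx.2]⟩
  have hsplit : Set.EqOn (fun x => √((x - a) * (b - x)) / (x * (1 - x)))
      (fun x => √((x - a) * (b - x)) / x + √((x - a) * (b - x)) / (1 - x)) (Set.uIcc a b) :=
    fun x hx => by
      obtain ⟨hx₀, hx₁⟩ := hpos x hx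
      field_simp
      ring
  have hint₁ : IntervalIntegrable (fun x => √((x - a) * (b - x)) / x) volume a b :=
    ContinuousOn.intervalIntegrable (ContinuousOn.div (by fun_prop) (by fun_prop)
      fun x hx => (hpos x hx).1.ne')
  have hint₂ : IntervalIntegrable (fun x => √((x - a) * (b - x)) / (1 - x)) volume a b :=
    ContinuousOn.intervalIntegrable (ContinuousOn.div (by fun_prop) (by fun_prop)
      fun x hx => (hpos x hx).2.ne')
  rw [integral_congr hsplit, integral_add hint₁ hint₂, integral_sqrt_mul_div_self ha hab,
    integral_sqrt_mul_div_const_sub hab hb, sqrt_mul ha.le, sqrt_mul (by linarith)]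
  have ha' := sq_sqrt ha.le
  have hb' := sq_sqrt (ha.trans hab).le
  have ha'' := sq_sqrt (show 0 ≤ 1 - a by linarith)
  have hb'' := sq_sqrt (show 0 ≤ 1 - b by linarith)
  linear_combination (π / 2) * (ha' + hb' + ha'' + hb'')

theorem coeffs_eq_of_roots {A B C u₁ u₂ : ℝ} (hne : u₁ ≠ u₂)
    (h₁ : A * u₁ * (1 - u₁) - B * u₁ - C * (1 - u₁) = 0)
    (h₂ : A * u₂ * (1 - u₂) - B * u₂ - C * (1 - u₂) = 0) :
    B = A * ((1 - u₁) * (1 - u₂)) ∧ C = A * (u₁ * u₂) := by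
  have hsum : A * (u₁ + u₂) = A - B + C := by
    have h : (u₁ - u₂) * (A - A * (u₁ + u₂) - B + C) = 0 := by linear_combination h₁ - h₂
    linarith [(mul_eq_zero.1 h).resolve_left (sub_ne_zero.2 hne)]
  have hC : C = A * (u₁ * u₂) := by linear_combination -h₁ - u₁ * hsum
  exact ⟨by linear_combination hsum + hC, hC⟩

theorem strictMonoOn_sin_sq : StrictMonoOn (fun θ => sin θ ^ 2) (Set.Icc 0 (π / 2)) :=
  fun x hx y hy hxy => pow_lt_pow_left₀
    (strictMonoOn_sin ⟨by linarith [hx.1, pi_pos], hx.2⟩ ⟨by linarith [hy.1, pi_pos], hy.2⟩ hxy)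
    (sin_nonneg_of_nonneg_of_le_pi hx.1 (by linarith [hx.2, pi_pos])) two_ne_zero

theorem integral_comp_sin_sq_mul_deriv {g : ℝ → ℝ} {θ₁ θ₂ : ℝ} (hθ₁ : 0 ≤ θ₁) (hle : θ₁ ≤ θ₂)
    (hθ₂ : θ₂ ≤ π / 2) (hg : ContinuousOn g (Set.Icc (sin θ₁ ^ 2) (sin θ₂ ^ 2))) :
    ∫ θ in θ₁..θ₂, g (sin θ ^ 2) * (2 * sin θ * cos θ) = ∫ u in sin θ₁ ^ 2..sin θ₂ ^ 2, g u := by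
  refine integral_comp_mul_deriv' (f := fun θ => sin θ ^ 2)
    (fun θ _ => ((hasDerivAt_sin θ).pow 2).congr_deriv (by ring)) (by fun_prop) (hg.mono ?_)
  rw [Set.uIcc_of_le hle]
  exact (strictMonoOn_sin_sq.monotoneOn.mono (Set.Icc_subset_Icc hθ₁ hθ₂)).image_Icc_subset

section Trigonometric

variable {A B C θ : ℝ}

theorem sin_pos_and_cos_pos_of_mem_Ioo (hθ : θ ∈ Set.Ioo 0 (π / 2)) : 0 < sin θ ∧ 0 < cos θ :=
  ⟨sin_pos_of_pos_of_lt_pi hθ.1 (by linarith [hθ.2, pi_pos]),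
    cos_pos_of_mem_Ioo ⟨by linarith [hθ.1, pi_pos], hθ.2⟩⟩

theorem sin_sq_mem_Ioo (hθ : θ ∈ Set.Ioo 0 (π / 2)) : sin θ ^ 2 ∈ Set.Ioo 0 1 := by
  obtain ⟨hs, hc⟩ := sin_pos_and_cos_pos_of_mem_Ioo hθ
  exact ⟨by positivity, by nlinarith [sin_sq_add_cos_sq θ]⟩

theorem sub_div_cos_sq_sub_div_sin_sq_eq (hθ : θ ∈ Set.Ioo 0 (π / 2)) :
    A - B / cos θ ^ 2 - C / sin θ ^ 2 =
      (A * sin θ ^ 2 * (1 - sin θ ^ 2) - B * sin θ ^ 2 - C * (1 - sin θ ^ 2))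
        / (sin θ * cos θ) ^ 2 := by
  obtain ⟨hs, hc⟩ := sin_pos_and_cos_pos_of_mem_Ioo hθ
  rw [← cos_sq']
  field_simp

theorem sub_div_cos_sq_sub_div_sin_sq_eq_zero_iff (hθ : θ ∈ Set.Ioo 0 (π / 2)) :
    A - B / cos θ ^ 2 - C / sin θ ^ 2 = 0 ↔
      A * sin θ ^ 2 * (1 - sin θ ^ 2) - B * sin θ ^ 2 - C * (1 - sin θ ^ 2) = 0 := by
  obtain ⟨hs, hc⟩ := sin_pos_and_cos_pos_of_mem_Ioo hθ
  rw [sub_div_cos_sq_sub_div_sin_sq_eq hθ, div_eq_zero_iff, or_iff_left (by positivity)]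

theorem sqrt_sub_div_cos_sq_sub_div_sin_sq_eq {u₁ u₂ : ℝ} (hB : B = A * ((1 - u₁) * (1 - u₂)))
    (hC : C = A * (u₁ * u₂)) (hθ : θ ∈ Set.Ioo 0 (π / 2)) (h₁ : u₁ ≤ sin θ ^ 2)
    (h₂ : sin θ ^ 2 ≤ u₂) :
    √(A - B / cos θ ^ 2 - C / sin θ ^ 2) =
      √A / 2 * (√((sin θ ^ 2 - u₁) * (u₂ - sin θ ^ 2)) / (sin θ ^ 2 * (1 - sin θ ^ 2))
        * (2 * sin θ * cos θ)) := by
  obtain ⟨hs, hc⟩ := sin_pos_and_cos_pos_of_mem_Ioo hθ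
  have hQ : 0 ≤ (sin θ ^ 2 - u₁) * (u₂ - sin θ ^ 2) := mul_nonneg (by linarith) (by linarith)
  rw [sub_div_cos_sq_sub_div_sin_sq_eq hθ, hB, hC,
    show A * sin θ ^ 2 * (1 - sin θ ^ 2) - A * ((1 - u₁) * (1 - u₂)) * sin θ ^ 2
      - A * (u₁ * u₂) * (1 - sin θ ^ 2) = A * ((sin θ ^ 2 - u₁) * (u₂ - sin θ ^ 2)) by ring,
    sqrt_div' _ (sq_nonneg _), sqrt_sq (by positivity), sqrt_mul' _ hQ, ← cos_sq']
  field_simp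

end Trigonometric

theorem trigonometric_sommerfeld_integral_general (A B C : ℝ)
    (θ₁ θ₂ : ℝ)
    (hθ₁ : θ₁ ∈ Set.Ioo 0 (Real.pi / 2)) (hθ₂ : θ₂ ∈ Set.Ioo 0 (Real.pi / 2))
    (hlt : θ₁ < θ₂)
    (hzero₁ : A - B / Real.cos θ₁ ^ 2 - C / Real.sin θ₁ ^ 2 = 0)
    (hzero₂ : A - B / Real.cos θ₂ ^ 2 - C / Real.sin θ₂ ^ 2 = 0) :
    ∫ θ in θ₁..θ₂, Real.sqrt (A - B / Real.cos θ ^ 2 - C / Real.sin θ ^ 2)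
      = Real.pi / 2 * (Real.sqrt A - Real.sqrt B - Real.sqrt C) := by
  set u₁ := sin θ₁ ^ 2
  set u₂ := sin θ₂ ^ 2
  have hmono := strictMonoOn_sin_sq.mono (Set.Icc_subset_Icc hθ₁.1.le hθ₂.2.le)
  have hu : u₁ < u₂ := hmono (Set.left_mem_Icc.2 hlt.le) (Set.right_mem_Icc.2 hlt.le) hlt
  obtain ⟨hB, hC⟩ := coeffs_eq_of_roots hu.ne
    ((sub_div_cos_sq_sub_div_sin_sq_eq_zero_iff hθ₁).1 hzero₁)
    ((sub_div_cos_sq_sub_div_sin_sq_eq_zero_iff hθ₂).1 hzero₂)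
  set g : ℝ → ℝ := fun u => √((u - u₁) * (u₂ - u)) / (u * (1 - u))
  calc ∫ θ in θ₁..θ₂, √(A - B / cos θ ^ 2 - C / sin θ ^ 2)
      = ∫ θ in θ₁..θ₂, √A / 2 * (g (sin θ ^ 2) * (2 * sin θ * cos θ)) := by
        refine integral_congr fun θ hθ => ?_
        rw [Set.uIcc_of_le hlt.le] at hθ
        obtain ⟨h₁, h₂⟩ := hmono.monotoneOn.mapsTo_Icc hθ
        exact sqrt_sub_div_cos_sq_sub_div_sin_sq_eq hB hC (Set.Icc_subset_Ioo hθ₁.1 hθ₂.2 hθ) h₁ h₂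
    _ = √A / 2 * ∫ u in u₁..u₂, g u := by
        rw [integral_const_mul, integral_comp_sin_sq_mul_deriv hθ₁.1.le hlt.le hθ₂.2.le
          (continuousOn_sqrt_mul_div_mul_one_sub (sin_sq_mem_Ioo hθ₁).1 (sin_sq_mem_Ioo hθ₂).2)]
    _ = π / 2 * (√A - √B - √C) := by
        have hu₁ := (sin_sq_mem_Ioo hθ₁).1
        have hu₂ := (sin_sq_mem_Ioo hθ₂).2
        rw [integral_sqrt_mul_div_mul_one_sub hu₁ hu hu₂, hB, hC,
          sqrt_mul' A (show 0 ≤ u₁ * u₂ by positivity),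
          sqrt_mul' A (show 0 ≤ (1 - u₁) * (1 - u₂) from mul_nonneg (by linarith) (by linarith))]
        ring

/-- Trigonometric Sommerfeld-type integral: for `B, C > 0` and `√A > √B + √C`, with
`θ₁ < θ₂` the two zeros in `(0, π/2)` of `A - B/cos²θ - C/sin²θ`, one has
`∫_{θ₁}^{θ₂} √(A - B/cos²θ - C/sin²θ) dθ = (π/2)(√A - √B - √C)`. -/
theorem trigonometric_sommerfeld_integral (A B C : ℝ) (hB : 0 < B) (hC : 0 < C)
    (hA : Real.sqrt A > Real.sqrt B + Real.sqrt C)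
    (θ₁ θ₂ : ℝ)
    (hθ₁ : θ₁ ∈ Set.Ioo 0 (Real.pi / 2)) (hθ₂ : θ₂ ∈ Set.Ioo 0 (Real.pi / 2))
    (hlt : θ₁ < θ₂)
    (hzero₁ : A - B / Real.cos θ₁ ^ 2 - C / Real.sin θ₁ ^ 2 = 0)
    (hzero₂ : A - B / Real.cos θ₂ ^ 2 - C / Real.sin θ₂ ^ 2 = 0) :
    ∫ θ in θ₁..θ₂, Real.sqrt (A - B / Real.cos θ ^ 2 - C / Real.sin θ ^ 2)
      = Real.pi / 2 * (Real.sqrt A - Real.sqrt B - Real.sqrt C) :=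
  trigonometric_sommerfeld_integral_general A B C θ₁ θ₂ hθ₁ hθ₂ hlt hzero₁ hzero₂
end

section
/- Let ε be a real number with 0 < ε < 1 and let x₀ > 0 be the unique positive real with sech²(x₀) = ε. Then ∫_{−x₀}^{x₀} dx/√(sech²x − ε) = π/√ε. -/
/-!
Substituting `sinh x = sinh a · sin θ` maps `θ ∈ (-π/2, π/2)` onto `x ∈ (-a, a)`, and since
`sech² x - sech² a = (sinh² a - sinh² x) / (cosh x cosh a)²`, the Jacobian times the
integrand is the constant `cosh a`. Hence the integral is `π cosh a`, which is `π / √ε` for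
`ε = sech² a`.
-/

open Real intervalIntegral

open Set MeasureTheory

theorem inv_cosh_sq_sub_inv_cosh_sq (x a : ℝ) :
    (1 / cosh x) ^ 2 - (1 / cosh a) ^ 2 = (sinh a ^ 2 - sinh x ^ 2) / (cosh x * cosh a) ^ 2 := by
  have := (cosh_pos x).ne'
  have := (cosh_pos a).ne'
  field_simp
  rw [cosh_sq x, cosh_sq a]
  ring

theorem abs_mul_one_div_sqrt_inv_cosh_sq_sub {a x θ : ℝ} (ha : 0 < a) (hθ : 0 < cos θ)
    (hx : sinh x = sinh a * sin θ) :
    |sinh a * cos θ / cosh x| * (1 / √((1 / cosh x) ^ 2 - (1 / cosh a) ^ 2)) = cosh a := by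
  have hsinh : 0 < sinh a := sinh_pos_iff.2 ha
  have hdiff : sinh a ^ 2 - sinh x ^ 2 = (sinh a * cos θ) ^ 2 := by
    rw [hx]
    linear_combination -sinh a ^ 2 * sin_sq_add_cos_sq θ
  rw [inv_cosh_sq_sub_inv_cosh_sq, hdiff, ← div_pow, sqrt_sq (by positivity),
    abs_of_pos (by positivity)]
  have := (cosh_pos x).ne'
  field_simp

theorem strictMonoOn_arsinh_sinh_mul_sin {a : ℝ} (ha : 0 < a) :
    StrictMonoOn (fun θ => arsinh (sinh a * sin θ)) (Icc (-(π / 2)) (π / 2)) :=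
  (arsinh_strictMono.comp (strictMono_mul_left_of_pos (sinh_pos_iff.2 ha))).comp_strictMonoOn
    strictMonoOn_sin

theorem image_arsinh_sinh_mul_sin_Ioo {a : ℝ} (ha : 0 < a) :
    (fun θ => arsinh (sinh a * sin θ)) '' Ioo (-(π / 2)) (π / 2) = Ioo (-a) a := by
  rw [ContinuousOn.image_Ioo_of_strictMonoOn (hmono := strictMonoOn_arsinh_sinh_mul_sin ha)
    (by linarith [pi_pos]) (by exact (continuous_arsinh.comp (by fun_prop)).continuousOn)]
  simp [arsinh_sinh]

theorem hasDerivAt_arsinh_sinh_mul_sin (a θ : ℝ) :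
    HasDerivAt (fun θ => arsinh (sinh a * sin θ))
      (sinh a * cos θ / cosh (arsinh (sinh a * sin θ))) θ := by
  rw [cosh_arsinh, div_eq_inv_mul]
  exact ((hasDerivAt_sin θ).const_mul (sinh a)).arsinh

theorem integral_one_div_sqrt_inv_cosh_sq_sub {a : ℝ} (ha : 0 < a) :
    ∫ x in (-a)..a, 1 / √((1 / cosh x) ^ 2 - (1 / cosh a) ^ 2) = π * cosh a := by
  set f : ℝ → ℝ := fun x => 1 / √((1 / cosh x) ^ 2 - (1 / cosh a) ^ 2)
  set φ : ℝ → ℝ := fun θ => arsinh (sinh a * sin θ)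
  calc ∫ x in (-a)..a, f x
      = ∫ x in Ioo (-a) a, f x := by
        rw [integral_of_le (by linarith), integral_Ioc_eq_integral_Ioo]
    _ = ∫ θ in Ioo (-(π / 2)) (π / 2), |sinh a * cos θ / cosh (φ θ)| • f (φ θ) := by
        rw [← image_arsinh_sinh_mul_sin_Ioo ha]
        exact integral_image_eq_integral_abs_deriv_smul measurableSet_Ioo
          (fun θ _ => (hasDerivAt_arsinh_sinh_mul_sin a θ).hasDerivWithinAt)
          ((strictMonoOn_arsinh_sinh_mul_sin ha).injOn.mono Ioo_subset_Icc_self) f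
    _ = ∫ _ in Ioo (-(π / 2)) (π / 2), cosh a :=
        setIntegral_congr_fun measurableSet_Ioo fun θ hθ =>
          abs_mul_one_div_sqrt_inv_cosh_sq_sub ha (cos_pos_of_mem_Ioo hθ) (sinh_arsinh _)
    _ = π * cosh a := by
        rw [setIntegral_const, volume_real_Ioo, smul_eq_mul, sub_neg_eq_add, add_halves,
          max_eq_left pi_pos.le]

theorem hyperbolic_sommerfeld_derivative_integral_general (ε : ℝ)
    (x₀ : ℝ) (hx₀ : 0 < x₀) (hsech : (1 / Real.cosh x₀) ^ 2 = ε) :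
    ∫ x in (-x₀)..x₀, 1 / Real.sqrt ((1 / Real.cosh x) ^ 2 - ε)
      = Real.pi / Real.sqrt ε := by
  subst hsech
  rw [integral_one_div_sqrt_inv_cosh_sq_sub hx₀, sqrt_sq (by positivity),
    div_div_eq_mul_div, div_one]

/-- For `0 < ε < 1`, with `x₀ > 0` the unique positive real with `sech²(x₀) = ε`,
one has `∫_{-x₀}^{x₀} dx/√(sech²x - ε) = π/√ε`. -/
theorem hyperbolic_sommerfeld_derivative_integral (ε : ℝ) (hε₀ : 0 < ε) (hε₁ : ε < 1)
    (x₀ : ℝ) (hx₀ : 0 < x₀) (hsech : (1 / Real.cosh x₀) ^ 2 = ε) :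
    ∫ x in (-x₀)..x₀, 1 / Real.sqrt ((1 / Real.cosh x) ^ 2 - ε)
      = Real.pi / Real.sqrt ε :=
  hyperbolic_sommerfeld_derivative_integral_general ε x₀ hx₀ hsech
end
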